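/- Let ω ∈ {0,1,2}^ℕ be such that i_0(ω), i_1(ω), i_2(ω) are all finite. Let ε_0 = 0 if σ^{i_0(ω)}ω is the constant sequence (0,0,0,…) and ε_0 = 1 otherwise. Then the element a·d_ω of Aut(T) has order exactly 2^{i_0(ω) + ε_0}. -/

import Mathlib

namespace Grig

/-- Sequences ω ∈ {0,1,2}^ℕ (0-indexed: `ω n` is the paper's ω_{n+1}). -/
abbrev Seq := ℕ → Fin 3

/-- The shifted sequence σω. -/
def shift (ω : Seq) : Seq := fun n => ω (n + 1)

/-- The n-fold shifted sequence σⁿω. -/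
def shiftn (n : ℕ) (ω : Seq) : Seq := fun m => ω (m + n)

/-- The rooted automorphism `a`, as a map on words over {0,1} (encoded as `List Bool`). -/
def aMap : List Bool → List Bool
  | [] => []
  | x :: w => (!x) :: w

lemma aMap_invol : ∀ w, aMap (aMap w) = w := by
  intro w; cases w <;> simp [aMap]

/-- The rooted automorphism `a`. -/
def aPerm : Equiv.Perm (List Bool) := ⟨aMap, aMap, aMap_invol, aMap_invol⟩

/-- The directed automorphism with "trivial tag" `k` of the Grigorchuk group `G_ω`:
`k = 2` gives `b_ω`, `k = 1` gives `c_ω`, `k = 0` gives `d_ω`.  Its section at the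
vertex 1 is the corresponding automorphism for σω, and its section at the vertex 0
is `a` if ω₁ ≠ k and trivial if ω₁ = k. -/
def genMap (k : Fin 3) : Seq → List Bool → List Bool
  | _, [] => []
  | ω, false :: w => false :: (if ω 0 = k then w else aMap w)
  | ω, true :: w => true :: genMap k (shift ω) w

lemma genMap_invol (k : Fin 3) : ∀ (w : List Bool) (ω : Seq), genMap k ω (genMap k ω w) = w := by
  intro w
  induction w with
  | nil => intro ω; rfl
  | cons x w ih =>
      intro ω
      cases x with
      | false => by_cases h : ω 0 = k <;> simp [genMap, h, aMap_invol]
      | true => simp [genMap, ih]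

def genPerm (k : Fin 3) (ω : Seq) : Equiv.Perm (List Bool) :=
  ⟨genMap k ω, genMap k ω, fun w => genMap_invol k w ω, fun w => genMap_invol k w ω⟩

/-- The generator `b_ω`. -/
def b (ω : Seq) : Equiv.Perm (List Bool) := genPerm 2 ω
/-- The generator `c_ω`. -/
def c (ω : Seq) : Equiv.Perm (List Bool) := genPerm 1 ω
/-- The generator `d_ω`. -/
def d (ω : Seq) : Equiv.Perm (List Bool) := genPerm 0 ω

/-- The Grigorchuk group `G_ω = ⟨a, b_ω, c_ω, d_ω⟩`, as a subgroup of the group of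
permutations of the vertices of the binary rooted tree.  (Every generator preserves
word length and prefixes, so `G_ω` consists of automorphisms of the tree.) -/
def G (ω : Seq) : Subgroup (Equiv.Perm (List Bool)) :=
  Subgroup.closure {aPerm, b ω, c ω, d ω}

lemma aPerm_mem (ω : Seq) : aPerm ∈ G ω := Subgroup.subset_closure (by simp)
lemma b_mem (ω : Seq) : b ω ∈ G ω := Subgroup.subset_closure (by simp)
lemma c_mem (ω : Seq) : c ω ∈ G ω := Subgroup.subset_closure (by simp)
lemma d_mem (ω : Seq) : d ω ∈ G ω := Subgroup.subset_closure (by simp)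

/-- `a` as an element of `G_ω`. -/
def aSub (ω : Seq) : ↥(G ω) := ⟨aPerm, aPerm_mem ω⟩
/-- `b_ω` as an element of `G_ω`. -/
def bSub (ω : Seq) : ↥(G ω) := ⟨b ω, b_mem ω⟩
/-- `c_ω` as an element of `G_ω`. -/
def cSub (ω : Seq) : ↥(G ω) := ⟨c ω, c_mem ω⟩
/-- `d_ω` as an element of `G_ω`. -/
def dSub (ω : Seq) : ↥(G ω) := ⟨d ω, d_mem ω⟩

/-- The subgroup of permutations of the tree fixing every vertex of level `n`. -/
def levelStab (n : ℕ) : Subgroup (Equiv.Perm (List Bool)) where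
  carrier := {f | ∀ w : List Bool, w.length = n → f w = w}
  one_mem' := by intro w _; rfl
  mul_mem' := by
    intro f g hf hg w hw
    rw [Equiv.Perm.mul_apply, hg w hw, hf w hw]
  inv_mem' := by
    intro f hf w hw
    calc f⁻¹ w = f⁻¹ (f w) := by rw [hf w hw]
    _ = w := f.symm_apply_apply w

/-- The `n`-th level stabiliser `St_{G_ω}(n)` (as a subgroup of the ambient
permutation group). -/
def St (ω : Seq) (n : ℕ) : Subgroup (Equiv.Perm (List Bool)) := G ω ⊓ levelStab n

/-- The `n`-th level stabiliser `St_{G_ω}(n)` seen as a subgroup of `G_ω`. -/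
def stab (ω : Seq) (n : ℕ) : Subgroup ↥(G ω) := (levelStab n).subgroupOf (G ω)

lemma aMap_length (w : List Bool) : (aMap w).length = w.length := by
  cases w <;> simp [aMap]

lemma genMap_length (k : Fin 3) :
    ∀ (w : List Bool) (ω : Seq), (genMap k ω w).length = w.length := by
  intro w
  induction w with
  | nil => intro ω; rfl
  | cons x w ih =>
      intro ω
      cases x with
      | false => by_cases h : ω 0 = k <;> simp [genMap, h, aMap_length]
      | true => simp [genMap, ih]

/-- The subgroup of length-preserving permutations of the set of words. -/
def lenPres : Subgroup (Equiv.Perm (List Bool)) where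
  carrier := {f | ∀ w : List Bool, (f w).length = w.length}
  one_mem' := by intro w; rfl
  mul_mem' := by
    intro f g hf hg w
    rw [Equiv.Perm.mul_apply, hf, hg]
  inv_mem' := by
    intro f hf w
    conv_rhs => rw [← f.apply_symm_apply w, ← Equiv.Perm.coe_inv]
    rw [hf]

lemma G_le_lenPres (ω : Seq) : G ω ≤ lenPres := by
  rw [G]
  refine (Subgroup.closure_le _).2 ?_
  intro x hx
  simp only [Set.mem_insert_iff, Set.mem_singleton_iff] at hx
  rcases hx with rfl | rfl | rfl | rfl
  · exact fun w => aMap_length w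
  · exact fun w => genMap_length 2 w ω
  · exact fun w => genMap_length 1 w ω
  · exact fun w => genMap_length 0 w ω

instance stab_normal (ω : Seq) (n : ℕ) : (stab ω n).Normal := by
  constructor
  intro h hh g
  simp only [stab, Subgroup.mem_subgroupOf] at hh ⊢
  intro w hw
  have hginv : ((g : Equiv.Perm (List Bool))⁻¹ w).length = n := by
    rw [G_le_lenPres ω ((G ω).inv_mem g.2) w, hw]
  have : ((h : Equiv.Perm (List Bool))) ((g : Equiv.Perm (List Bool))⁻¹ w)
      = (g : Equiv.Perm (List Bool))⁻¹ w := hh _ hginv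
  simp only [Subgroup.coe_mul, InvMemClass.coe_inv, Equiv.Perm.mul_apply]
  rw [this, Equiv.Perm.coe_inv, Equiv.apply_symm_apply]

/-- A (spherical) system of generators of a group. -/
def SphericalSystem {Q : Type*} [Group Q] {r : ℕ} (T : Fin r → Q) : Prop :=
  3 ≤ r ∧ (∀ i, T i ≠ 1) ∧ Subgroup.closure (Set.range T) = ⊤ ∧ (List.ofFn T).prod = 1

/-- The set Σ(T): the union of all conjugates of the cyclic subgroups generated by
the entries of `T`. -/
def SigmaSet {Q : Type*} [Group Q] {r : ℕ} (T : Fin r → Q) : Set Q :=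
  ⋃ (g : Q) (i : Fin r), (fun x => g⁻¹ * x * g) '' (Subgroup.zpowers (T i) : Set Q)

/-- An (unmixed) ramification structure of size `(r₁, r₂)` for a group `Q`. -/
def HasRamificationStructure (Q : Type*) [Group Q] (r₁ r₂ : ℕ) : Prop :=
  ∃ (T₁ : Fin r₁ → Q) (T₂ : Fin r₂ → Q),
    SphericalSystem T₁ ∧ SphericalSystem T₂ ∧ SigmaSet T₁ ∩ SigmaSet T₂ = {1}

/-- `i_k(ω) = min {n ≥ 1 : ω_n = k}` (meaningful when some entry of ω equals `k`;
with our 0-indexing this is `sInf {n | ω n = k} + 1`). -/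
noncomputable def ikFin (k : Fin 3) (ω : Seq) : ℕ := sInf {n | ω n = k} + 1

/-- `m(ω) = max {n ≥ 1 : ω_1 = ⋯ = ω_n}` for a non-constant sequence ω;
with our 0-indexing this is the least index where ω differs from ω 0. -/
noncomputable def mval (ω : Seq) : ℕ := sInf {n | ω n ≠ ω 0}


/-- The normal closure of the element `x` relative to the subgroup `H`:
the subgroup generated by all `H`-conjugates of `x`. -/
def nclIn (H : Subgroup (Equiv.Perm (List Bool))) (x : Equiv.Perm (List Bool)) :
    Subgroup (Equiv.Perm (List Bool)) :=
  Subgroup.closure {y | ∃ g ∈ H, y = g * x * g⁻¹}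

/-- The `d`-generator of `G_ω`: `d_ω` if ω₁ = 0, `c_ω` if ω₁ = 1 and `b_ω` if ω₁ = 2;
with our encoding this is simply `genPerm (ω 0) ω`. -/
def dGenPerm (ω : Seq) : Equiv.Perm (List Bool) := genPerm (ω 0) ω

/-- The subgroup of permutations fixing every word that does not have `u` as a prefix. -/
def awayStab (u : List Bool) : Subgroup (Equiv.Perm (List Bool)) where
  carrier := {f | ∀ w : List Bool, ¬ u <+: w → f w = w}
  one_mem' := by intro w _; rfl
  mul_mem' := by
    intro f g hf hg w hw
    rw [Equiv.Perm.mul_apply, hg w hw, hf w hw]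
  inv_mem' := by
    intro f hf w hw
    calc f⁻¹ w = f⁻¹ (f w) := by rw [hf w hw]
    _ = w := f.symm_apply_apply w

/-- The rigid vertex stabiliser `Rist_{G_ω}(u)`. -/
def Rist (ω : Seq) (u : List Bool) : Subgroup (Equiv.Perm (List Bool)) :=
  G ω ⊓ awayStab u

/-- The section map φ_u : for an automorphism `f` fixing the vertex `u`, the value
`sectionFun u f` is the section of `f` at `u` (as a map on words). -/
def sectionFun (u : List Bool) (f : Equiv.Perm (List Bool)) : List Bool → List Bool :=
  fun v => (f (u ++ v)).drop u.length

/-- The `d`-generator `x_ω` of `G_ω`, as an element of `G_ω`. -/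
def xGen (ω : Seq) : ↥(G ω) :=
  if ω 0 = 0 then ⟨d ω, Subgroup.subset_closure (by simp)⟩
  else if ω 0 = 1 then ⟨c ω, Subgroup.subset_closure (by simp)⟩
  else ⟨b ω, Subgroup.subset_closure (by simp)⟩

/-- The `c`-generator `y_ω` of `G_ω` (determined by ω_{m(ω)+1}), as an element of `G_ω`. -/
noncomputable def yGen (ω : Seq) : ↥(G ω) :=
  if ω (mval ω) = 0 then ⟨d ω, Subgroup.subset_closure (by simp)⟩
  else if ω (mval ω) = 1 then ⟨c ω, Subgroup.subset_closure (by simp)⟩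
  else ⟨b ω, Subgroup.subset_closure (by simp)⟩

open scoped Classical in
/-- The bound `M` of the main theorem. -/
noncomputable def Mval (ω : Seq) : ℕ :=
  if ∀ k : Fin 3, ∃ n, shift ω n = k then
    (Finset.univ.sup fun k : Fin 3 => ikFin k (shift ω)) + 4
  else if ∀ n, shift ω n = shift ω 0 then 4
  else ((Finset.univ.filter fun k : Fin 3 => ∃ n, shift ω n = k).sup
          fun k => ikFin k (shift ω)) + 4


end Grig

namespace Grig

/-! ### Auxiliary machinery for computing the order of `a * d ω`. -/

/-- The "pair" map: acts on the two subtrees by `f` and `g` respectively. -/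
def pairMap (f g : List Bool → List Bool) : List Bool → List Bool
  | [] => []
  | false :: w => false :: f w
  | true :: w => true :: g w

/-- The "pair" permutation `(f, g)`. -/
def pairPerm (f g : Equiv.Perm (List Bool)) : Equiv.Perm (List Bool) where
  toFun := pairMap f g
  invFun := pairMap f.symm g.symm
  left_inv := by intro w; rcases w with _ | ⟨_ | _, v⟩ <;> simp [pairMap]
  right_inv := by intro w; rcases w with _ | ⟨_ | _, v⟩ <;> simp [pairMap]

/-- The "swapping pair" map. -/
def swapMap (f g : List Bool → List Bool) : List Bool → List Bool
  | [] => []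
  | false :: w => true :: f w
  | true :: w => false :: g w

/-- The "swapping pair" permutation. -/
def swapPerm (f g : Equiv.Perm (List Bool)) : Equiv.Perm (List Bool) where
  toFun := swapMap f g
  invFun := swapMap g.symm f.symm
  left_inv := by intro w; rcases w with _ | ⟨_ | _, v⟩ <;> simp [swapMap]
  right_inv := by intro w; rcases w with _ | ⟨_ | _, v⟩ <;> simp [swapMap]

@[simp] lemma pairPerm_apply (f g : Equiv.Perm (List Bool)) (w : List Bool) :
    pairPerm f g w = pairMap f g w := rfl

@[simp] lemma swapPerm_apply (f g : Equiv.Perm (List Bool)) (w : List Bool) :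
    swapPerm f g w = swapMap f g w := rfl

lemma pair_mul (f g f' g' : Equiv.Perm (List Bool)) :
    pairPerm f g * pairPerm f' g' = pairPerm (f * f') (g * g') := by
  ext w
  rcases w with _ | ⟨_ | _, v⟩ <;>
    simp [Equiv.Perm.mul_apply, pairMap]

lemma pair_one : pairPerm 1 1 = 1 := by
  ext w
  rcases w with _ | ⟨_ | _, v⟩ <;> simp [pairMap]

lemma pair_pow (f g : Equiv.Perm (List Bool)) (n : ℕ) :
    pairPerm f g ^ n = pairPerm (f ^ n) (g ^ n) := by
  induction n with
  | zero => simp [pair_one]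
  | succ n ih => rw [pow_succ, pow_succ, pow_succ, ih, pair_mul]

lemma pair_eq_one_iff (f g : Equiv.Perm (List Bool)) :
    pairPerm f g = 1 ↔ f = 1 ∧ g = 1 := by
  constructor
  · intro hfg
    constructor
    · refine Equiv.ext fun v => ?_
      have := Equiv.ext_iff.1 hfg (false :: v)
      simpa [pairMap] using this
    · refine Equiv.ext fun v => ?_
      have := Equiv.ext_iff.1 hfg (true :: v)
      simpa [pairMap] using this
  · rintro ⟨rfl, rfl⟩; exact pair_one

lemma swap_sq (f g : Equiv.Perm (List Bool)) :
    swapPerm f g * swapPerm f g = pairPerm (g * f) (f * g) := by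
  ext w
  rcases w with _ | ⟨_ | _, v⟩ <;>
    simp [Equiv.Perm.mul_apply, swapMap, pairMap]

lemma swap_odd_pow_ne_one (f g : Equiv.Perm (List Bool)) (n : ℕ) :
    swapPerm f g ^ (2 * n + 1) ≠ 1 := by
  intro hone
  have hsq : swapPerm f g ^ (2 * n + 1)
      = pairPerm ((g * f) ^ n) ((f * g) ^ n) * swapPerm f g := by
    rw [pow_succ, pow_mul, sq, swap_sq, pair_pow]
  have h2 : (swapPerm f g ^ (2 * n + 1)) [false] = [false] := by rw [hone]; rfl
  rw [hsq] at h2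
  simp [Equiv.Perm.mul_apply, swapMap, pairMap] at h2

lemma orderOf_pair_of_eq (p q : Equiv.Perm (List Bool)) (hpq : orderOf p = orderOf q) :
    orderOf (pairPerm p q) = orderOf p := by
  have h1 : pairPerm p q ^ orderOf p = 1 := by
    rw [pair_pow, pow_orderOf_eq_one, hpq, pow_orderOf_eq_one, pair_one]
  have h2 : p ^ orderOf (pairPerm p q) = 1 := by
    have := pow_orderOf_eq_one (pairPerm p q)
    rw [pair_pow, pair_eq_one_iff] at this
    exact this.1
  exact Nat.dvd_antisymm (orderOf_dvd_of_pow_eq_one h1) (orderOf_dvd_of_pow_eq_one h2)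

lemma orderOf_swapPerm (f g : Equiv.Perm (List Bool))
    (hy : orderOf (swapPerm f g * swapPerm f g) ≠ 0) :
    orderOf (swapPerm f g) = 2 * orderOf (swapPerm f g * swapPerm f g) := by
  set x := swapPerm f g with hx
  set n := orderOf (x * x) with hn
  have hx2 : x * x = x ^ 2 := (sq x).symm
  have h1 : x ^ (2 * n) = 1 := by
    rw [pow_mul, ← hx2]
    exact pow_orderOf_eq_one _
  rcases Nat.even_or_odd (orderOf x) with he | ho
  · obtain ⟨k, hk⟩ := he
    have hxk : (x * x) ^ k = 1 := by
      rw [hx2, ← pow_mul, two_mul, ← hk, pow_orderOf_eq_one]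
    have hnk : n ∣ k := orderOf_dvd_of_pow_eq_one hxk
    have hd1 : orderOf x ∣ 2 * n := orderOf_dvd_of_pow_eq_one h1
    have hd2 : 2 * n ∣ orderOf x := by
      rw [hk, ← two_mul]
      exact mul_dvd_mul_left 2 hnk
    exact Nat.dvd_antisymm hd1 hd2
  · exfalso
    obtain ⟨k, hk⟩ := ho
    exact swap_odd_pow_ne_one f g k (by rw [← hk, pow_orderOf_eq_one])

lemma genPerm_apply (k : Fin 3) (ω : Seq) (w : List Bool) :
    genPerm k ω w = genMap k ω w := rfl

lemma aPerm_apply (w : List Bool) : aPerm w = aMap w := rfl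

lemma genPerm_mul_self (k : Fin 3) (ω : Seq) : genPerm k ω * genPerm k ω = 1 := by
  ext w
  simp [Equiv.Perm.mul_apply, genPerm_apply, genMap_invol]

lemma genPerm_inv (k : Fin 3) (ω : Seq) : (genPerm k ω)⁻¹ = genPerm k ω :=
  inv_eq_of_mul_eq_one_right (genPerm_mul_self k ω)

lemma aPerm_mul_self : aPerm * aPerm = 1 := by
  ext w
  simp [Equiv.Perm.mul_apply, aPerm_apply, aMap_invol]

lemma aPerm_inv : aPerm⁻¹ = aPerm := inv_eq_of_mul_eq_one_right aPerm_mul_self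

/-- Decomposition of `a * d ω` as a swapping pair. -/
lemma a_mul_d (ω : Seq) :
    aPerm * d ω = swapPerm (if ω 0 = 0 then 1 else aPerm) (d (shift ω)) := by
  ext w
  rcases w with _ | ⟨_ | _, v⟩
  · by_cases h : ω 0 = 0 <;>
      simp [Equiv.Perm.mul_apply, d, genPerm_apply, genMap, aPerm_apply, aMap, swapMap, h]
  · by_cases h : ω 0 = 0 <;>
      simp [Equiv.Perm.mul_apply, d, genPerm_apply, genMap, aPerm_apply, aMap, swapMap, h]
  · simp [Equiv.Perm.mul_apply, d, genPerm_apply, genMap, aPerm_apply, aMap, swapMap]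

lemma genMap_zero_eq_id : ∀ (w : List Bool) (ω : Seq), (∀ n, ω n = 0) → genMap 0 ω w = w := by
  intro w
  induction w with
  | nil => intro ω _; rfl
  | cons x v ih =>
      intro ω hω
      cases x with
      | false => simp [genMap, hω 0]
      | true => simp [genMap, ih (shift ω) fun n => hω (n + 1)]

lemma d_eq_one (ω : Seq) (hω : ∀ n, ω n = 0) : d ω = 1 := by
  ext w
  simp [d, genPerm_apply, genMap_zero_eq_id w ω hω]

lemma genMap_zero_moves : ∀ (n : ℕ) (ω : Seq), ω n ≠ 0 →
    genMap 0 ω (List.replicate n true ++ [false, true])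
      ≠ List.replicate n true ++ [false, true] := by
  intro n
  induction n with
  | zero =>
      intro ω hω
      simp [genMap, hω, aMap]
  | succ n ih =>
      intro ω hω
      have : List.replicate (n + 1) true ++ [false, true]
          = true :: (List.replicate n true ++ [false, true]) := by
        simp [List.replicate_succ]
      rw [this]
      simp only [genMap, ne_eq, List.cons.injEq, true_and]
      exact ih (shift ω) hω

lemma d_ne_one (ω : Seq) (hω : ∃ n, ω n ≠ 0) : d ω ≠ 1 := by
  obtain ⟨n, hn⟩ := hω
  intro hd
  exact genMap_zero_moves n ω hn (by
    have := Equiv.ext_iff.1 hd (List.replicate n true ++ [false, true])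
    simpa [d, genPerm_apply] using this)

open scoped Classical in
lemma orderOf_d (ω : Seq) : orderOf (d ω) = if ∀ n, ω n = 0 then 1 else 2 := by
  by_cases hω : ∀ n, ω n = 0
  · simp [hω, d_eq_one ω hω]
  · rw [if_neg hω]
    push_neg at hω
    have : Fact (Nat.Prime 2) := ⟨Nat.prime_two⟩
    exact orderOf_eq_prime (genPerm_mul_self 0 ω ▸ sq (d ω) ▸ rfl) (d_ne_one ω hω)

open scoped Classical in
/-- The key induction: order of `a * d ω` when `0` occurs in `ω` first at index `N`. -/
lemma key_orderOf : ∀ (N : ℕ) (ω : Seq), (∃ m, ω m = 0) → sInf {n | ω n = 0} = N →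
    orderOf (aPerm * d ω) =
      2 ^ ((N + 1) + if ∀ m, shiftn (N + 1) ω m = 0 then 0 else 1) := by
  intro N
  induction N with
  | zero =>
      intro ω hm hsinf
      have h0 : ω 0 = 0 := by
        have h2 : sInf {n | ω n = 0} ∈ {n | ω n = 0} :=
          Nat.sInf_mem ⟨hm.choose, hm.choose_spec⟩
        rw [hsinf] at h2
        exact h2
      rw [a_mul_d, if_pos h0]
      have hsq : swapPerm 1 (d (shift ω)) * swapPerm 1 (d (shift ω))
          = pairPerm (d (shift ω)) (d (shift ω)) := by
        rw [swap_sq, mul_one, one_mul]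
      have hody : orderOf (swapPerm 1 (d (shift ω)) * swapPerm 1 (d (shift ω)))
          = orderOf (d (shift ω)) := by
        rw [hsq, orderOf_pair_of_eq _ _ rfl]
      rw [orderOf_swapPerm _ _ (by
        rw [hody, orderOf_d]
        split <;> simp), hody, orderOf_d]
      by_cases hc : ∀ m, shiftn (0 + 1) ω m = 0
      · rw [if_pos hc, if_pos (show ∀ n, shift ω n = 0 from fun n => hc n)]
        norm_num
      · rw [if_neg hc, if_neg (show ¬ ∀ n, shift ω n = 0 from fun H => hc fun m => H m)]
        norm_num
  | succ N ih =>
      intro ω hm hsinf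
      have hne : ω 0 ≠ 0 := by
        intro h0
        have : sInf {n | ω n = 0} = 0 := Nat.sInf_eq_zero.2 (Or.inl h0)
        omega
      have hm' : ∃ m, shift ω m = 0 := by
        obtain ⟨m, hmm⟩ := hm
        rcases m with _ | m
        · exact absurd hmm hne
        · exact ⟨m, hmm⟩
      have hsinf' : sInf {n | shift ω n = 0} = N := by
        have hne' : {n | shift ω n = 0}.Nonempty := hm'
        have h1 : shift ω (sInf {n | shift ω n = 0}) = 0 := Nat.sInf_mem hne'
        have h2 : sInf {n | ω n = 0} ∈ {n | ω n = 0} :=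
          Nat.sInf_mem ⟨hm.choose, hm.choose_spec⟩
        rw [hsinf] at h2
        -- ω (N+1) = 0, so N ∈ {n | shift ω n = 0}
        have h3 : sInf {n | shift ω n = 0} ≤ N :=
          Nat.sInf_le (show N ∈ {n | shift ω n = 0} from h2)
        -- and shift ω t = 0 means ω (t+1) = 0 so N+1 ≤ t+1
        have h4 : N + 1 ≤ sInf {n | shift ω n = 0} + 1 := by
          rw [← hsinf]
          exact Nat.sInf_le h1
        omega
      have IH := ih (shift ω) hm' hsinf'
      rw [a_mul_d, if_neg hne]
      have hsq : swapPerm aPerm (d (shift ω)) * swapPerm aPerm (d (shift ω))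
          = pairPerm (d (shift ω) * aPerm) (aPerm * d (shift ω)) := swap_sq _ _
      have hconj : orderOf (d (shift ω) * aPerm) = orderOf (aPerm * d (shift ω)) := by
        have hinv : d (shift ω) * aPerm = (aPerm * d (shift ω))⁻¹ := by
          rw [mul_inv_rev, aPerm_inv]
          show _ = (genPerm 0 (shift ω))⁻¹ * _
          rw [genPerm_inv]
          rfl
        rw [hinv, orderOf_inv]
      have hody : orderOf (swapPerm aPerm (d (shift ω)) * swapPerm aPerm (d (shift ω)))
          = orderOf (aPerm * d (shift ω)) := by
        rw [hsq, orderOf_pair_of_eq _ _ hconj, hconj]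
      have hKne : orderOf (aPerm * d (shift ω)) ≠ 0 := by
        rw [IH]; positivity
      rw [orderOf_swapPerm _ _ (by rw [hody]; exact hKne), hody, IH]
      have heq : ∀ m : ℕ, shiftn (N + 1) (shift ω) m = shiftn (N + 1 + 1) ω m :=
        fun _ => rfl
      by_cases hc : ∀ m, shiftn (N + 1 + 1) ω m = 0
      · rw [if_pos hc, if_pos (show ∀ m, shiftn (N + 1) (shift ω) m = 0 from
          fun m => (heq m).trans (hc m))]
        ring
      · rw [if_neg hc, if_neg (show ¬ ∀ m, shiftn (N + 1) (shift ω) m = 0 from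
          fun H => hc fun m => (heq m).symm.trans (H m))]
        ring

open scoped Classical in
/-- If `i_0(ω), i_1(ω), i_2(ω)` are all finite, then
`o(a d_ω) = 2^{i_0(ω) + ε_0}`, where `ε_0 = 0` if `σ^{i_0(ω)}ω = (0,0,0,…)`
and `ε_0 = 1` otherwise. -/
theorem orderOf_a_mul_d (ω : Seq) (h : ∀ k : Fin 3, ∃ m, ω m = k) :
    orderOf (aPerm * d ω) =
      2 ^ (ikFin 0 ω + if ∀ m, shiftn (ikFin 0 ω) ω m = 0 then 0 else 1) := by
  have hik : ikFin 0 ω = sInf {n | ω n = 0} + 1 := rfl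
  rw [hik]
  exact key_orderOf _ ω (h 0) rfl

end Grig
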